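/- Let M be a sharp, integral commutative monoid and Γ = (X, r, i, l) an M-metrised graph. Then dgon(Γ) ≤ ggon(Γ). Equivalently: for every harmonic, non-degenerate morphism φ : Γ → T onto an M-metrised tree T, there exists a divisor D ∈ Div(Γ) with r(D) ≥ 1 and deg(D) = deg(φ); in particular dgon(Γ) ≤ deg(φ). -/

import Mathlib

noncomputable section
open scoped Classical

/-! ### Groupification of a cancellative additive commutative monoid -/

variable (M : Type) [AddCancelCommMonoid M]

def gpSetoid : Setoid (M × M) where
  r p q := p.1 + q.2 = q.1 + p.2
  iseqv := by
    refine ⟨fun p => rfl, fun h => h.symm, fun {p q r} h1 h2 => ?_⟩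
    have key : (p.1 + r.2) + (q.1 + q.2) = (r.1 + p.2) + (q.1 + q.2) := by
      calc (p.1 + r.2) + (q.1 + q.2) = (p.1 + q.2) + (q.1 + r.2) := by abel
        _ = (q.1 + p.2) + (r.1 + q.2) := by rw [h1, h2]
        _ = (r.1 + p.2) + (q.1 + q.2) := by abel
    exact add_right_cancel key

/-- The groupification `M^gp` of a cancellative commutative monoid `M`:
the quotient of `M × M` by `(a,b) ~ (c,d) ↔ a + d = c + b` (think of `(a,b)` as `a - b`). -/
def Gp : Type := Quotient (gpSetoid M)

namespace Gp

variable {M}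

/-- The element `a - b` of `M^gp`. -/
def mk (a b : M) : Gp M := Quotient.mk (gpSetoid M) (a, b)

instance : Zero (Gp M) := ⟨mk 0 0⟩

instance : Add (Gp M) :=
  ⟨Quotient.map₂ (fun p q => (p.1 + q.1, p.2 + q.2)) (by
    intro p p' hp q q' hq
    show (p.1 + q.1) + (p'.2 + q'.2) = (p'.1 + q'.1) + (p.2 + q.2)
    calc (p.1 + q.1) + (p'.2 + q'.2) = (p.1 + p'.2) + (q.1 + q'.2) := by abel
      _ = (p'.1 + p.2) + (q'.1 + q.2) := by rw [hp, hq]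
      _ = (p'.1 + q'.1) + (p.2 + q.2) := by abel)⟩

instance : Neg (Gp M) :=
  ⟨Quotient.map (fun p => (p.2, p.1)) (by
    intro p p' hp
    show p.2 + p'.1 = p'.2 + p.1
    calc p.2 + p'.1 = p'.1 + p.2 := by abel
      _ = p.1 + p'.2 := hp.symm
      _ = p'.2 + p.1 := by abel)⟩

lemma mk_add_mk (a b c d : M) : mk a b + mk c d = mk (a + c) (b + d) := rfl
lemma neg_mk (a b : M) : -(mk a b) = mk b a := rfl
lemma zero_def : (0 : Gp M) = mk 0 0 := rfl

instance : AddCommGroup (Gp M) where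
  add := (· + ·)
  zero := 0
  neg := Neg.neg
  nsmul := nsmulRec
  zsmul := zsmulRec
  add_assoc := by
    intro a b c
    induction a using Quotient.inductionOn with | h a =>
    induction b using Quotient.inductionOn with | h b =>
    induction c using Quotient.inductionOn with | h c =>
    exact Quotient.sound (by
      show ((a.1 + b.1) + c.1) + (a.2 + (b.2 + c.2)) = (a.1 + (b.1 + c.1)) + ((a.2 + b.2) + c.2)
      abel)
  zero_add := by
    intro a
    induction a using Quotient.inductionOn with | h a =>
    exact Quotient.sound (by
      show (0 + a.1) + a.2 = a.1 + (0 + a.2)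
      abel)
  add_zero := by
    intro a
    induction a using Quotient.inductionOn with | h a =>
    exact Quotient.sound (by
      show (a.1 + 0) + a.2 = a.1 + (a.2 + 0)
      abel)
  neg_add_cancel := by
    intro a
    induction a using Quotient.inductionOn with | h a =>
    exact Quotient.sound (by
      show (a.2 + a.1) + 0 = 0 + (a.1 + a.2)
      abel)
  add_comm := by
    intro a b
    induction a using Quotient.inductionOn with | h a =>
    induction b using Quotient.inductionOn with | h b =>
    exact Quotient.sound (by
      show (a.1 + b.1) + (b.2 + a.2) = (b.1 + a.1) + (a.2 + b.2)
      abel)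

/-- The canonical map `M → M^gp`. -/
def of : M →+ Gp M where
  toFun a := mk a 0
  map_zero' := rfl
  map_add' := by
    intro a b
    exact (Quotient.sound (by
      show (a + b) + (0 + 0) = (a + b) + 0
      abel) : mk (a + b) 0 = mk (a + b) (0 + 0))

/-- Functoriality of groupification: a monoid homomorphism `f : M →+ N` induces
`f^gp : M^gp →+ N^gp`. -/
def map {N : Type} [AddCancelCommMonoid N] (f : M →+ N) : Gp M →+ Gp N where
  toFun := Quotient.map (fun p => (f p.1, f p.2)) (by
    intro p p' hp
    show f p.1 + f p'.2 = f p'.1 + f p.2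
    rw [← f.map_add, ← f.map_add, hp])
  map_zero' := by
    show mk (f 0) (f 0) = mk 0 0
    rw [f.map_zero]
  map_add' := by
    intro a b
    induction a using Quotient.inductionOn with | h a =>
    induction b using Quotient.inductionOn with | h b =>
    show mk (f (a.1 + b.1)) (f (a.2 + b.2)) = mk (f a.1 + f b.1) (f a.2 + f b.2)
    rw [f.map_add, f.map_add]

end Gp

/-- Sharpness: the only invertible element of `M` is `0`. -/
def Sharp : Prop := ∀ a b : M, a + b = 0 → a = 0

/-! ### Monoid-metrised graphs -/

/-- A graph (Definition 2.3 of the paper) together with a metric taking values in the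
monoid `M`: `X` is the finite set of vertices and half-edges, `r` sends an element to its
root vertex, `i` is the pairing involution on half-edges, and `l` assigns a length in `M`
to every half-edge (and `0` to every vertex). -/
structure MGraph where
  X : Type
  [finX : Fintype X]
  r : X → X
  i : X → X
  r_idem : ∀ x, r (r x) = r x
  i_invol : ∀ x, i (i x) = x
  fix_iff : ∀ x, i x = x ↔ r x = x
  l : X → M
  l_i : ∀ x, l (i x) = l x
  l_zero_iff : ∀ x, l x = 0 ↔ i x = x

attribute [instance] MGraph.finX

namespace MGraph

variable {M} (G : MGraph M)

/-- `x` is a vertex iff it is fixed by the involution. -/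
def IsVertex (x : G.X) : Prop := G.i x = x

/-- `x` is a half-edge iff it is not fixed by the involution. -/
def IsHalfEdge (x : G.X) : Prop := G.i x ≠ x

/-- The vertex set of `G`. -/
abbrev V : Type := { x : G.X // G.IsVertex x }

/-- The root of any element of `X` is a vertex. -/
def rv (x : G.X) : G.V := ⟨G.r x, (G.fix_iff (G.r x)).mpr (G.r_idem x)⟩

/-- Two vertices are adjacent if some edge joins them. -/
def Adj (u v : G.V) : Prop := ∃ x, G.IsHalfEdge x ∧ G.rv x = u ∧ G.rv (G.i x) = v

/-- `G` is connected. (All graphs in the paper are assumed connected.) -/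
def IsConnected : Prop := Nonempty G.X ∧ ∀ u v : G.V, Relation.ReflTransGen G.Adj u v

/-- The degree of a divisor `D : V → ℤ`. -/
def degD (D : G.V → ℤ) : ℤ := ∑ v, D v

/-- A divisor is effective if all its coefficients are nonnegative. -/
def Effective (D : G.V → ℤ) : Prop := ∀ v, 0 ≤ D v

/-- `g : V → M^gp` is piecewise linear if, along every half-edge, the difference of the
values of `g` at the two endpoints is an integer multiple of the length of that edge. -/
def IsPL (g : G.V → Gp M) : Prop :=
  ∀ x, G.IsHalfEdge x → ∃ n : ℤ, g (G.rv x) - g (G.rv (G.i x)) = n • Gp.of (G.l x)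

/-- The (outgoing) integer slope of `g` along the half-edge `x`. -/
def slope (g : G.V → Gp M) (x : G.X) : ℤ :=
  if h : ∃ n : ℤ, g (G.rv x) - g (G.rv (G.i x)) = n • Gp.of (G.l x) then h.choose else 0

/-- The Laplacian of a piecewise linear function. -/
def lap (g : G.V → Gp M) : G.V → ℤ :=
  fun v => ∑ x : G.X, if G.IsHalfEdge x ∧ G.r x = v.val then G.slope g x else 0

/-- Principal divisors: those of the form `Δ(g)` for a piecewise linear `g`. -/
def IsPrincipal (D : G.V → ℤ) : Prop := ∃ g, G.IsPL g ∧ G.lap g = D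

/-- The rank of a divisor `D`:
`r(D) = max { k : for every effective divisor F of degree k, |D - F| ≠ ∅ }`. -/
def rank (D : G.V → ℤ) : ℤ :=
  sSup {k : ℤ | ∀ F : G.V → ℤ, G.Effective F → G.degD F = k →
    ∃ E : G.V → ℤ, G.Effective E ∧ G.IsPrincipal (D - F - E)}

/-- The divisorial gonality: the minimal degree of a divisor of rank at least 1. -/
def dgon : ℤ := sInf {d : ℤ | ∃ D : G.V → ℤ, 1 ≤ G.rank D ∧ G.degD D = d}

end MGraph


/-! ### Morphisms of monoid-metrised graphs -/

namespace MGraph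

variable {M : Type} [AddCancelCommMonoid M]

/-- A morphism of `M`-metrised graphs (Definition 3.1 of the paper): vertices map to
vertices; a half-edge mapping to a half-edge respects roots and the target length is an
integer multiple of the source length; a half-edge collapsed to a vertex has both of its
endpoints mapped to that vertex. -/
structure Hom (G G' : MGraph M) where
  f : G.X → G'.X
  vtx : ∀ x, G.IsVertex x → G'.IsVertex (f x)
  edge : ∀ x, G.IsHalfEdge x → G'.IsHalfEdge (f x) →
    f (G.r x) = G'.r (f x) ∧ f (G.r (G.i x)) = G'.r (G'.i (f x)) ∧
      ∃ n : ℕ, G'.l (f x) = n • G.l x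
  contr : ∀ x, G.IsHalfEdge x → G'.IsVertex (f x) →
    f (G.r x) = f x ∧ f (G.r (G.i x)) = f x

namespace Hom

variable {G G' : MGraph M} (φ : Hom G G')

/-- The induced map on vertices. -/
def vmap (v : G.V) : G'.V := ⟨φ.f v.val, φ.vtx v.val v.property⟩

/-- The slope `μ_φ(x) = l'(φ(x)) / l(x)` of `φ` along a half-edge `x` (zero if `φ`
collapses `x` to a vertex). -/
def mu (x : G.X) : ℕ :=
  if h : G'.IsHalfEdge (φ.f x) ∧ ∃ n : ℕ, G'.l (φ.f x) = n • G.l x then h.2.choose else 0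

/-- The multiplicity `m_{φ,v}(e') = ∑_{x ∈ H_v, φ(x) = e'} μ_φ(x)` of a half-edge `e'` of
`G'` at a vertex `v` of `G`. -/
def multAt (v : G.V) (e' : G'.X) : ℕ :=
  ∑ x : G.X, if G.IsHalfEdge x ∧ G.r x = v.val ∧ φ.f x = e' then φ.mu x else 0

/-- `φ` is harmonic (= horizontally conformal): for every vertex `v`, all half-edges of
`G'` rooted at `φ(v)` have the same multiplicity at `v`. -/
def Harmonic : Prop :=
  ∀ (v : G.V) (e' f' : G'.X), G'.IsHalfEdge e' → G'.IsHalfEdge f' →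
    G'.r e' = φ.f v.val → G'.r f' = φ.f v.val → φ.multAt v e' = φ.multAt v f'

/-- The horizontal multiplicity `m_φ(v)` of a vertex (the common value of `m_{φ,v}(e')`
over half-edges `e'` rooted at `φ(v)`; zero if there are none). -/
def mV (v : G.V) : ℕ :=
  if h : ∃ e', G'.IsHalfEdge e' ∧ G'.r e' = φ.f v.val then φ.multAt v h.choose else 0

/-- `φ` is non-degenerate if every vertex has positive horizontal multiplicity. -/
def Nondeg : Prop := ∀ v : G.V, 0 < φ.mV v

/-- The multiplicity `m_φ(e') = ∑_{v : φ(v) = r'(e')} m_{φ,v}(e')` of a half-edge of `G'`. -/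
def mE (e' : G'.X) : ℕ :=
  ∑ v : G.V, if φ.f v.val = G'.r e' then φ.multAt v e' else 0

/-- The degree of a harmonic morphism: `deg(φ) = m_φ(e')` for any half-edge `e'` of `G'`. -/
def deg : ℕ := if h : ∃ e', G'.IsHalfEdge e' then φ.mE h.choose else 0

/-- The pullback of divisors: `φ*(D') = ∑_v D'(φ(v)) · m_φ(v) · [v]`. -/
def pullback (D' : G'.V → ℤ) : G.V → ℤ :=
  fun v => D' (φ.vmap v) * (φ.mV v : ℤ)

/-- The pushforward of divisors: `φ_*(D) = ∑_v D(v) · [φ(v)]`. -/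
def pushforward (D : G.V → ℤ) : G'.V → ℤ :=
  fun v' => ∑ v : G.V, if φ.vmap v = v' then D v else 0

end Hom

/-- A cycle in `G`: a cyclic sequence of half-edges `e_0, …, e_k` in which consecutive
half-edges are consecutive (the far endpoint of each is the root of the next) and which
never immediately backtracks. -/
def HasCycle (G : MGraph M) : Prop :=
  ∃ (k : ℕ) (e : ZMod (k + 1) → G.X), (∀ j, G.IsHalfEdge (e j)) ∧
    (∀ j, G.r (G.i (e j)) = G.r (e (j + 1))) ∧ (∀ j, e (j + 1) ≠ G.i (e j))

/-- A tree is a connected graph with no cycles. -/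
def IsTree (G : MGraph M) : Prop := G.IsConnected ∧ ¬ G.HasCycle

/-- The geometric gonality of `G`: the minimal degree of a harmonic, non-degenerate
morphism from `G` onto an `M`-metrised tree, or `∞` if no such morphism exists. -/
def ggon (G : MGraph M) : ℕ∞ :=
  sInf {d : ℕ∞ | ∃ (T : MGraph M) (φ : Hom G T),
    T.IsTree ∧ φ.Harmonic ∧ φ.Nondeg ∧ (φ.deg : ℕ∞) = d}

end MGraph

/-!
Let `φ : Γ → T` be harmonic and non-degenerate. The pullback `φ^*[t]` of a vertex of `T` has degree
`deg φ`. In a tree every edge `e` separates, so `l(e)` times the indicator of the side of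
`r (i e)` is piecewise linear with Laplacian `[r (i e)] - [r e]`; hence any two vertices of `T`
are linearly equivalent. Composing with `φ` pulls back piecewise linear functions and their
Laplacians, so all the divisors `φ^*[t]` are linearly equivalent on `Γ`, and
`φ^*[φ w] ≥ [w]` by non-degeneracy. Thus `φ^*[t]` has rank at least `1`.
-/

variable {M}

theorem Gp.of_injective : Function.Injective (Gp.of : M →+ Gp M) := fun a b h => by
  have h' : a + 0 = b + 0 := Quotient.exact h
  simpa using h'

theorem Sharp.eq_zero_of_nsmul_eq_zero (hs : Sharp M) {a : M} {n : ℕ} (h : n • a = 0)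
    (hn : n ≠ 0) : a = 0 := by
  obtain ⟨m, rfl⟩ := Nat.exists_eq_succ_of_ne_zero hn
  exact hs a (m • a) (by rwa [succ_nsmul'] at h)

theorem Sharp.zsmul_left_injective (hs : Sharp M) {a : M} (ha : a ≠ 0) :
    Function.Injective (fun n : ℤ => n • Gp.of a) := by
  intro m n h
  have hmn : (m - n).natAbs • Gp.of a = 0 := by
    rw [natAbs_nsmul_eq_zero, sub_zsmul]
    exact sub_eq_zero.mpr h
  rw [← map_nsmul, ← map_zero Gp.of] at hmn
  by_contra hne
  exact ha (hs.eq_zero_of_nsmul_eq_zero (Gp.of_injective hmn) (by omega))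

namespace MGraph

variable {G : MGraph M}

theorem isHalfEdge_i_iff {x : G.X} : G.IsHalfEdge (G.i x) ↔ G.IsHalfEdge x := by
  simp only [IsHalfEdge, G.i_invol, ne_comm]

theorem l_ne_zero {x : G.X} (hx : G.IsHalfEdge x) : G.l x ≠ 0 :=
  fun h => hx ((G.l_zero_iff x).mp h)

theorem slope_eq (hs : Sharp M) {g : G.V → Gp M} {x : G.X} (hx : G.IsHalfEdge x) {n : ℤ}
    (h : g (G.rv x) - g (G.rv (G.i x)) = n • Gp.of (G.l x)) : G.slope g x = n := by
  have hex : ∃ m : ℤ, g (G.rv x) - g (G.rv (G.i x)) = m • Gp.of (G.l x) := ⟨n, h⟩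
  rw [slope, dif_pos hex]
  exact hs.zsmul_left_injective (l_ne_zero hx) (hex.choose_spec.symm.trans h)

theorem slope_spec (hs : Sharp M) {g : G.V → Gp M} (hg : G.IsPL g) {x : G.X}
    (hx : G.IsHalfEdge x) : g (G.rv x) - g (G.rv (G.i x)) = G.slope g x • Gp.of (G.l x) := by
  obtain ⟨n, hn⟩ := hg x hx
  rwa [slope_eq hs hx hn]

theorem slope_i (hs : Sharp M) {g : G.V → Gp M} (hg : G.IsPL g) {x : G.X}
    (hx : G.IsHalfEdge x) : G.slope g (G.i x) = -G.slope g x := by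
  apply slope_eq hs (isHalfEdge_i_iff.mpr hx)
  rw [G.i_invol, G.l_i, neg_zsmul, ← slope_spec hs hg hx, neg_sub]

theorem isPrincipal_zero (hs : Sharp M) : G.IsPrincipal 0 := by
  refine ⟨0, fun x _ => ⟨0, by simp⟩, funext fun v => Finset.sum_eq_zero fun x _ => ?_⟩
  split_ifs with h
  · exact slope_eq hs h.1 (by simp)
  · rfl

theorem IsPrincipal.add (hs : Sharp M) {D E : G.V → ℤ} (hD : G.IsPrincipal D)
    (hE : G.IsPrincipal E) : G.IsPrincipal (D + E) := by
  obtain ⟨g, hg, rfl⟩ := hD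
  obtain ⟨h, hh, rfl⟩ := hE
  have hdiff : ∀ x, G.IsHalfEdge x → (g + h) (G.rv x) - (g + h) (G.rv (G.i x)) =
      (G.slope g x + G.slope h x) • Gp.of (G.l x) := fun x hx => by
    rw [add_zsmul, ← slope_spec hs hg hx, ← slope_spec hs hh hx, Pi.add_apply, Pi.add_apply]
    abel
  refine ⟨g + h, fun x hx => ⟨_, hdiff x hx⟩, funext fun v => ?_⟩
  simp only [lap, Pi.add_apply, ← Finset.sum_add_distrib]
  refine Finset.sum_congr rfl fun x _ => ?_
  split_ifs with hc
  · exact slope_eq hs hc.1 (hdiff x hc.1)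
  · rfl

theorem r_eq_val_iff {x : G.X} {v : G.V} : G.r x = v.val ↔ G.rv x = v :=
  ⟨fun h => Subtype.ext h, fun h => h ▸ rfl⟩

theorem degD_lap (hs : Sharp M) {g : G.V → Gp M} (hg : G.IsPL g) : G.degD (G.lap g) = 0 := by
  set f : G.X → ℤ := fun x => if G.IsHalfEdge x then G.slope g x else 0
  have hsum : G.degD (G.lap g) = ∑ x, f x := by
    simp only [degD, lap]
    rw [Finset.sum_comm]
    refine Finset.sum_congr rfl fun x _ => ?_
    by_cases hx : G.IsHalfEdge x <;> simp [f, hx, r_eq_val_iff]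
  have hanti : ∑ x, f x = -∑ x, f x := by
    rw [← Finset.sum_neg_distrib, ← Equiv.sum_comp (Function.Involutive.toPerm _ G.i_invol) f]
    refine Finset.sum_congr rfl fun x _ => ?_
    show f (G.i x) = -f x
    by_cases hx : G.IsHalfEdge x
    · simp [f, hx, isHalfEdge_i_iff, slope_i hs hg hx]
    · simp [f, hx, isHalfEdge_i_iff]
  omega

def rankSet (G : MGraph M) (D : G.V → ℤ) : Set ℤ :=
  {k | ∀ F : G.V → ℤ, G.Effective F → G.degD F = k →
    ∃ E : G.V → ℤ, G.Effective E ∧ G.IsPrincipal (D - F - E)}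

theorem rank_eq_sSup_rankSet (D : G.V → ℤ) : G.rank D = sSup (G.rankSet D) := rfl

theorem degD_sub (D E : G.V → ℤ) : G.degD (D - E) = G.degD D - G.degD E :=
  Finset.sum_sub_distrib _ _

theorem degD_single (v : G.V) (k : ℤ) : G.degD (Pi.single v k) = k := by
  simp [degD]

theorem effective_single (v : G.V) {k : ℤ} (hk : 0 ≤ k) : G.Effective (Pi.single v k) :=
  fun w => by by_cases h : w = v <;> simp [h, hk]

theorem degD_nonneg {E : G.V → ℤ} (hE : G.Effective E) : 0 ≤ G.degD E :=
  Finset.sum_nonneg fun v _ => hE v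

theorem degD_le_of_isPrincipal (hs : Sharp M) {D E F : G.V → ℤ} (hE : G.Effective E)
    (h : G.IsPrincipal (D - F - E)) : G.degD F ≤ G.degD D := by
  obtain ⟨g, hg, hlap⟩ := h
  have h0 := degD_lap hs hg
  rw [hlap, degD_sub, degD_sub] at h0
  linarith [degD_nonneg hE]

theorem le_degD_of_mem_rankSet (hs : Sharp M) [Nonempty G.V] {D : G.V → ℤ} {k : ℤ}
    (hk : 0 ≤ k) (h : k ∈ G.rankSet D) : k ≤ G.degD D := by
  obtain ⟨v⟩ := ‹Nonempty G.V›
  obtain ⟨E, hE, hP⟩ := h (Pi.single v k) (effective_single v hk) (degD_single v k)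
  simpa [degD_single] using degD_le_of_isPrincipal hs hE hP

theorem bddAbove_rankSet (hs : Sharp M) [Nonempty G.V] (D : G.V → ℤ) :
    BddAbove (G.rankSet D) :=
  ⟨max (G.degD D) 0, fun k hk => (le_total k 0).elim le_max_of_le_right
    fun h => le_max_of_le_left (le_degD_of_mem_rankSet hs h hk)⟩

theorem rank_le_degD (hs : Sharp M) [Nonempty G.V] {D : G.V → ℤ} (h : 0 < G.rank D) :
    G.rank D ≤ G.degD D := by
  have hne : (G.rankSet D).Nonempty := by
    by_contra he
    rw [Set.not_nonempty_iff_eq_empty] at he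
    rw [rank_eq_sSup_rankSet, he, Int.csSup_empty] at h
    exact h.false
  exact le_degD_of_mem_rankSet hs h.le (Int.csSup_mem hne (bddAbove_rankSet hs D))

theorem dgon_le_degD (hs : Sharp M) [Nonempty G.V] {D : G.V → ℤ} (h : 1 ≤ G.rank D) :
    G.dgon ≤ G.degD D :=
  csInf_le ⟨1, by rintro _ ⟨D', hD', rfl⟩; exact hD'.trans (rank_le_degD hs hD')⟩ ⟨D, h, rfl⟩

theorem exists_eq_single_of_degD_eq_one {F : G.V → ℤ} (hF : G.Effective F)
    (h1 : G.degD F = 1) : ∃ w, F = Pi.single w 1 := by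
  obtain ⟨w, hw⟩ : ∃ w, 0 < F w := by
    by_contra! hle
    have := Finset.sum_nonpos fun v (_ : v ∈ Finset.univ) => hle v
    rw [degD] at h1
    omega
  refine ⟨w, ?_⟩
  have hrest : G.Effective (F - Pi.single w 1) := fun v => by
    by_cases hv : v = w
    · subst hv
      simp only [Pi.sub_apply, Pi.single_eq_same, Int.sub_nonneg]
      omega
    · simpa [hv] using hF v
  have hzero : G.degD (F - Pi.single w 1) = 0 := by rw [degD_sub, h1, degD_single, sub_self]
  ext v
  have := (Finset.sum_eq_zero_iff_of_nonneg fun v _ => hrest v).mp hzero v (Finset.mem_univ v)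
  rwa [Pi.sub_apply, sub_eq_zero] at this

theorem one_le_rank (hs : Sharp M) [Nonempty G.V] {D : G.V → ℤ}
    (h : ∀ w, ∃ E, G.Effective E ∧ G.IsPrincipal (D - Pi.single w 1 - E)) : 1 ≤ G.rank D :=
  le_csSup (bddAbove_rankSet hs D) fun F hF hdeg => by
    obtain ⟨w, rfl⟩ := exists_eq_single_of_degD_eq_one hF hdeg
    exact h w

/-- `y` continues a walk arriving along `x`, without turning back along `x`. -/
def Follows (G : MGraph M) (x y : G.X) : Prop := G.r (G.i x) = G.r y ∧ y ≠ G.i x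

theorem hasCycle_of_isChain_follows {x : G.X} {L : List G.X}
    (hhalf : ∀ y ∈ x :: L, G.IsHalfEdge y) (hchain : (x :: L ++ [x]).IsChain G.Follows) :
    G.HasCycle := by
  set C := x :: L ++ [x]
  have hlen : C.length = L.length + 2 := by simp [C]
  have hhalfC : ∀ y ∈ C, G.IsHalfEdge y := fun y hy => by
    rcases List.mem_append.mp hy with hy | hy
    · exact hhalf y hy
    · exact hhalf y (by simp_all)
  have hstep : ∀ m, m + 1 < C.length → G.Follows (C.getD m x) (C.getD (m + 1) x) :=
    fun m hm => by
      rw [C.getD_eq_getElem x (by omega), C.getD_eq_getElem x hm]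
      exact List.isChain_iff_getElem.mp hchain m hm
  have hwrap : ∀ m ≤ L.length + 1, C.getD (m % (L.length + 1)) x = C.getD m x := by
    intro m hm
    rcases hm.lt_or_eq with hm | rfl
    · rw [Nat.mod_eq_of_lt hm]
    · simp [C]
  have hval : ∀ j : ZMod (L.length + 1), (j + 1).val = (j.val + 1) % (L.length + 1) := by
    intro j
    rw [ZMod.val_add, ZMod.val_one_eq_one_mod, Nat.add_mod_mod]
  have hnext : ∀ j : ZMod (L.length + 1),
      G.Follows (C.getD j.val x) (C.getD (j + 1).val x) := by
    intro j
    have hj := ZMod.val_lt j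
    rw [hval, hwrap _ hj]
    exact hstep _ (by omega)
  refine ⟨L.length, fun j => C.getD j.val x, fun j => ?_, fun j => (hnext j).1,
    fun j => (hnext j).2⟩
  have hj := ZMod.val_lt j
  show G.IsHalfEdge (C.getD j.val x)
  rw [C.getD_eq_getElem x (by omega)]
  exact hhalfC _ (List.getElem_mem _)

def AdjAvoiding (G : MGraph M) (e : G.X) (u v : G.V) : Prop :=
  ∃ x, G.IsHalfEdge x ∧ x ≠ e ∧ x ≠ G.i e ∧ G.rv x = u ∧ G.rv (G.i x) = v

theorem AdjAvoiding.symm {e : G.X} {u v : G.V} (h : G.AdjAvoiding e u v) :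
    G.AdjAvoiding e v u := by
  obtain ⟨x, hx, hxe, hxie, rfl, rfl⟩ := h
  refine ⟨G.i x, isHalfEdge_i_iff.mpr hx, ?_, ?_, rfl, by rw [G.i_invol]⟩
  · rintro rfl
    exact hxie (G.i_invol x).symm
  · intro h
    exact hxe (by simpa [G.i_invol] using congrArg G.i h)

/-- A walk avoiding the edge `{e, i e}` from `r (i e)` to `w`, recorded backwards after `e` and
with every immediate backtrack cancelled. -/
theorem exists_follows_chain_of_reflTransGen {e : G.X} {w : G.V}
    (h : Relation.ReflTransGen (G.AdjAvoiding e) (G.rv (G.i e)) w) :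
    ∃ W : List G.X, (∀ y ∈ W, G.IsHalfEdge y ∧ y ≠ G.i e) ∧
      (W ++ [e]).IsChain (flip G.Follows) ∧ G.rv (G.i (W.headD e)) = w := by
  induction h with
  | refl => exact ⟨[], by simp, List.isChain_singleton e, rfl⟩
  | tail _ hstep ih =>
    obtain ⟨W, hW, hchain, hend⟩ := ih
    obtain ⟨x, hx, -, hxie, hrx, rfl⟩ := hstep
    by_cases hback : W.headD e = G.i x
    · cases W with
      | nil => exact absurd (by simpa [G.i_invol] using (congrArg G.i hback).symm) hxie
      | cons y W' =>
        obtain rfl : y = G.i x := hback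
        refine ⟨W', fun z hz => hW z (List.mem_cons_of_mem _ hz), hchain.tail, ?_⟩
        have hfol : G.Follows (W'.headD e) (G.i x) := by
          cases W' <;>
            simp only [List.cons_append, List.nil_append, List.isChain_cons_cons] at hchain <;>
            exact hchain.1
        exact Subtype.ext hfol.1
    · refine ⟨x :: W, ?_, ?_, rfl⟩
      · simpa using ⟨⟨hx, hxie⟩, hW⟩
      · refine List.isChain_cons.mpr ⟨fun b hb => ?_, hchain⟩
        obtain rfl : b = W.headD e := by cases W <;> simp_all
        refine ⟨congrArg Subtype.val (hend.trans hrx.symm), ?_⟩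
        rintro rfl
        exact hback (G.i_invol _).symm

theorem not_reflTransGen_adjAvoiding (hG : ¬G.HasCycle) {e : G.X} (he : G.IsHalfEdge e) :
    ¬Relation.ReflTransGen (G.AdjAvoiding e) (G.rv (G.i e)) (G.rv e) := fun h => by
  obtain ⟨W, hW, hchain, hend⟩ := exists_follows_chain_of_reflTransGen h
  refine hG (hasCycle_of_isChain_follows (x := e) (L := W.reverse) ?_ ?_)
  · simpa [he] using fun y hy => (hW y hy).1
  · have hclose : G.Follows (W.headD e) e := by
      refine ⟨congrArg Subtype.val hend, fun heq => ?_⟩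
      cases W with
      | nil => exact he heq.symm
      | cons y W' => exact (hW y List.mem_cons_self).2 (by rw [show e = G.i y from heq, G.i_invol])
    have hrev : e :: W.reverse ++ [e] = (e :: (W ++ [e])).reverse := by simp
    rw [hrev, List.isChain_reverse]
    refine List.isChain_cons.mpr ⟨fun b hb => ?_, hchain⟩
    obtain rfl : b = W.headD e := by cases W <;> simp_all
    exact hclose

def sideFunction (G : MGraph M) (e : G.X) : G.V → Gp M := fun v =>
  if Relation.ReflTransGen (G.AdjAvoiding e) (G.rv (G.i e)) v then Gp.of (G.l e) else 0

theorem sideFunction_sub (hG : ¬G.HasCycle) {e : G.X} (he : G.IsHalfEdge e) {x : G.X}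
    (hx : G.IsHalfEdge x) :
    G.sideFunction e (G.rv x) - G.sideFunction e (G.rv (G.i x)) =
      ((if x = G.i e then 1 else 0) - (if x = e then 1 else 0) : ℤ) • Gp.of (G.l x) := by
  have hS : Relation.ReflTransGen (G.AdjAvoiding e) (G.rv (G.i e)) (G.rv (G.i e)) := .refl
  have hS' := not_reflTransGen_adjAvoiding hG he
  have hie : G.i e ≠ e := he
  by_cases hxe : x = e
  · subst hxe
    simp [sideFunction, hS, hS', hie.symm]
  by_cases hxie : x = G.i e
  · subst hxie
    simp [sideFunction, hS, hS', G.i_invol, G.l_i, hie]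
  have hadj : G.AdjAvoiding e (G.rv x) (G.rv (G.i x)) := ⟨x, hx, hxe, hxie, rfl, rfl⟩
  have hside : Relation.ReflTransGen (G.AdjAvoiding e) (G.rv (G.i e)) (G.rv x) ↔
      Relation.ReflTransGen (G.AdjAvoiding e) (G.rv (G.i e)) (G.rv (G.i x)) :=
    ⟨fun h => h.tail hadj, fun h => h.tail hadj.symm⟩
  simp [sideFunction, hside, hxe, hxie]

theorem lap_sideFunction (hs : Sharp M) (hG : ¬G.HasCycle) {e : G.X} (he : G.IsHalfEdge e) :
    G.lap (G.sideFunction e) = Pi.single (G.rv (G.i e)) 1 - Pi.single (G.rv e) 1 := by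
  have hie : G.i e ≠ e := he
  funext v
  have hterm : ∀ x, (if G.IsHalfEdge x ∧ G.r x = v.val then G.slope (G.sideFunction e) x
      else 0) = (if x = G.i e then (if G.rv x = v then 1 else 0) else 0) -
        (if x = e then (if G.rv x = v then 1 else 0) else 0) := by
    intro x
    by_cases hx : G.IsHalfEdge x
    · simp only [hx, true_and, r_eq_val_iff, slope_eq hs hx (sideFunction_sub hG he hx)]
      by_cases hxe : x = e
      · subst hxe
        simp [hie.symm, apply_ite Neg.neg]
      by_cases hxie : x = G.i e
      · subst hxie
        simp [hie]
      · simp [hxe, hxie]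
    · have hxe : x ≠ e := fun h => hx (h ▸ he)
      have hxie : x ≠ G.i e := fun h => hx (h ▸ isHalfEdge_i_iff.mpr he)
      simp [hx, hxe, hxie]
  simp only [lap, hterm]
  rw [Finset.sum_sub_distrib, Finset.sum_ite_eq', Finset.sum_ite_eq']
  simp [Pi.single_apply, eq_comm]

theorem IsTree.isPrincipal_single_sub_single (hs : Sharp M) (hG : G.IsTree) (s s' : G.V) :
    G.IsPrincipal (Pi.single s 1 - Pi.single s' 1) := by
  induction hG.1.2 s' s with
  | refl => simpa using isPrincipal_zero hs
  | tail _ hstep ih =>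
    obtain ⟨x, hx, rfl, rfl⟩ := hstep
    have hcut : G.IsPrincipal (Pi.single (G.rv (G.i x)) 1 - Pi.single (G.rv x) 1) :=
      ⟨_, fun y hy => ⟨_, sideFunction_sub hG.2 hx hy⟩, lap_sideFunction hs hG.2 hx⟩
    simpa using hcut.add hs ih

end MGraph

namespace MGraph.Hom

variable {G T : MGraph M} (φ : Hom G T)

theorem mu_spec {x : G.X} (hx : G.IsHalfEdge x) (hfx : T.IsHalfEdge (φ.f x)) :
    T.l (φ.f x) = φ.mu x • G.l x := by
  have h : T.IsHalfEdge (φ.f x) ∧ ∃ n : ℕ, T.l (φ.f x) = n • G.l x :=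
    ⟨hfx, (φ.edge x hx hfx).2.2⟩
  rw [mu, dif_pos h]
  exact h.2.choose_spec

theorem mu_eq_zero {x : G.X} (hfx : ¬T.IsHalfEdge (φ.f x)) : φ.mu x = 0 := by
  rw [mu, dif_neg fun h => hfx h.1]

theorem sub_comp_vmap (hs : Sharp M) {h : T.V → Gp M} (hh : T.IsPL h) {x : G.X}
    (hx : G.IsHalfEdge x) :
    h (φ.vmap (G.rv x)) - h (φ.vmap (G.rv (G.i x))) =
      (T.slope h (φ.f x) * φ.mu x) • Gp.of (G.l x) := by
  by_cases hfx : T.IsHalfEdge (φ.f x)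
  · obtain ⟨h1, h2, -⟩ := φ.edge x hx hfx
    have hv1 : φ.vmap (G.rv x) = T.rv (φ.f x) := Subtype.ext h1
    have hv2 : φ.vmap (G.rv (G.i x)) = T.rv (T.i (φ.f x)) := Subtype.ext h2
    rw [hv1, hv2, T.slope_spec hs hh hfx, φ.mu_spec hx hfx, map_nsmul, mul_zsmul,
      natCast_zsmul]
  · obtain ⟨h1, h2⟩ := φ.contr x hx (not_not.mp hfx)
    have hv : φ.vmap (G.rv x) = φ.vmap (G.rv (G.i x)) := Subtype.ext (h1.trans h2.symm)
    rw [hv, sub_self, φ.mu_eq_zero hfx, Nat.cast_zero, mul_zero, zero_zsmul]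

variable {φ}

theorem multAt_eq (hharm : φ.Harmonic) (v : G.V) (e : T.X) :
    φ.multAt v e = if T.IsHalfEdge e ∧ T.r e = φ.f v.val then φ.mV v else 0 := by
  split_ifs with he
  · have hex : ∃ e', T.IsHalfEdge e' ∧ T.r e' = φ.f v.val := ⟨e, he⟩
    rw [mV, dif_pos hex]
    exact hharm v e _ he.1 hex.choose_spec.1 he.2 hex.choose_spec.2
  · refine Finset.sum_eq_zero fun x _ => ?_
    split_ifs with hx
    · obtain ⟨hx, hr, rfl⟩ := hx
      by_cases hfx : T.IsHalfEdge (φ.f x)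
      · exact absurd ⟨hfx, by rw [← (φ.edge x hx hfx).1, hr]⟩ he
      · exact φ.mu_eq_zero hfx
    · rfl

theorem lap_comp_vmap (hs : Sharp M) (hharm : φ.Harmonic) {h : T.V → Gp M} (hh : T.IsPL h) :
    G.lap (h ∘ φ.vmap) = φ.pullback (T.lap h) := by
  funext v
  have hslope : ∀ x, G.IsHalfEdge x → G.slope (h ∘ φ.vmap) x = T.slope h (φ.f x) * φ.mu x :=
    fun x hx => G.slope_eq hs hx (φ.sub_comp_vmap hs hh hx)
  calc G.lap (h ∘ φ.vmap) v
      = ∑ x, if G.IsHalfEdge x ∧ G.r x = v.val then T.slope h (φ.f x) * φ.mu x else 0 :=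
        Finset.sum_congr rfl fun x _ => by
          split_ifs with hx
          · exact hslope x hx.1
          · rfl
    _ = ∑ e, ∑ x, if G.IsHalfEdge x ∧ G.r x = v.val ∧ φ.f x = e then
          T.slope h e * φ.mu x else 0 := by
        rw [Finset.sum_comm]
        refine Finset.sum_congr rfl fun x _ => ?_
        split_ifs with hx
        · simp [hx]
        · exact (Finset.sum_eq_zero fun e _ => if_neg fun h => hx ⟨h.1, h.2.1⟩).symm
    _ = ∑ e, T.slope h e * φ.multAt v e := by
        simp [multAt, Finset.mul_sum, mul_ite]
    _ = φ.pullback (T.lap h) v := by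
        simp only [multAt_eq hharm, pullback, lap, vmap, Finset.sum_mul]
        refine Finset.sum_congr rfl fun e _ => ?_
        by_cases hc : T.IsHalfEdge e ∧ T.r e = φ.f v.val <;> simp [hc]

theorem _root_.MGraph.IsPrincipal.pullback (hs : Sharp M) (hharm : φ.Harmonic) {D : T.V → ℤ}
    (hD : T.IsPrincipal D) : G.IsPrincipal (φ.pullback D) := by
  obtain ⟨h, hh, rfl⟩ := hD
  refine ⟨h ∘ φ.vmap, fun x hx => ⟨_, φ.sub_comp_vmap hs hh hx⟩, lap_comp_vmap hs hharm hh⟩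

theorem pullback_sub (D E : T.V → ℤ) : φ.pullback (D - E) = φ.pullback D - φ.pullback E := by
  funext v
  simp [pullback, sub_mul]

theorem degD_pullback_single (hharm : φ.Harmonic) {e : T.X} (he : T.IsHalfEdge e) :
    G.degD (φ.pullback (Pi.single (T.rv e) 1)) = φ.mE e := by
  simp only [degD, mE, Nat.cast_sum, Nat.cast_ite, Nat.cast_zero]
  refine Finset.sum_congr rfl fun v _ => ?_
  by_cases hv : φ.f v.val = T.r e
  · simp [pullback, hv, multAt_eq hharm, he, Pi.single_apply, vmap, rv]
  · simp [pullback, hv, vmap, rv, Subtype.ext_iff]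

theorem single_le_pullback_single (hnd : φ.Nondeg) (w : G.V) :
    Pi.single w 1 ≤ φ.pullback (Pi.single (φ.vmap w) 1) := fun v => by
  by_cases hv : v = w
  · subst hv
    simp only [pullback, Pi.single_eq_same, one_mul, Nat.one_le_cast]
    exact hnd v
  · simp only [pullback, Pi.single_apply, hv, if_false, ite_mul, one_mul, zero_mul]
    positivity

theorem exists_deg_eq_mE (hnd : φ.Nondeg) [Nonempty G.V] :
    ∃ e, T.IsHalfEdge e ∧ φ.deg = φ.mE e := by
  obtain ⟨v⟩ := ‹Nonempty G.V›
  have hT : ∃ e, T.IsHalfEdge e := by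
    by_contra! hT
    have hv := hnd v
    rw [mV, dif_neg fun ⟨e, he, _⟩ => hT e he] at hv
    exact hv.false
  exact ⟨hT.choose, hT.choose_spec, by rw [deg, dif_pos hT]⟩

end MGraph.Hom

/-- **Theorem 3.2** (`dgon(Γ) ≤ ggon(Γ)`), in its equivalent pointwise form: for every
harmonic, non-degenerate morphism `φ : Γ → T` onto an `M`-metrised tree `T`, there is a
divisor `D` on `Γ` of rank at least `1` with `deg(D) = deg(φ)`; in particular
`dgon(Γ) ≤ deg(φ)`. -/
theorem MGraph.dgon_le_ggon (M : Type) [AddCancelCommMonoid M] (hsharp : Sharp M)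
    (G : MGraph M) (hconn : G.IsConnected) :
    ∀ (T : MGraph M) (φ : MGraph.Hom G T), T.IsTree → φ.Harmonic → φ.Nondeg →
      (∃ D : G.V → ℤ, 1 ≤ G.rank D ∧ G.degD D = (φ.deg : ℤ)) ∧ G.dgon ≤ (φ.deg : ℤ) := by
  intro T φ hT hharm hnd
  have : Nonempty G.V := hconn.1.map G.rv
  obtain ⟨e, he, hdeg⟩ := Hom.exists_deg_eq_mE hnd
  set D := φ.pullback (Pi.single (T.rv e) 1)
  have hD : G.degD D = φ.deg := by rw [hdeg, Hom.degD_pullback_single hharm he]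
  have hrank : 1 ≤ G.rank D := one_le_rank hsharp fun w =>
    ⟨φ.pullback (Pi.single (φ.vmap w) 1) - Pi.single w 1,
      fun v => sub_nonneg.mpr (Hom.single_le_pullback_single hnd w v), by
        rw [sub_sub_sub_cancel_right, ← Hom.pullback_sub]
        exact (hT.isPrincipal_single_sub_single hsharp _ _).pullback hsharp hharm⟩
  exact ⟨⟨D, hrank, hD⟩, hD ▸ dgon_le_degD hsharp hrank⟩

end
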